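/- Let F : [0,1] → ℝ be monotone increasing with F(0) = 0, F(1) = 1, and suppose |F(x) - F(y)| ≤ 5·|x-y|^c for some c > 0. Let f : [0,1] → ℝ be continuous and suppose there are C > 0 and k ≥ 1 such that |f(x) - f(y)| ≤ C·(-log₂|x-y|)^k · |F(x) - F(y)| for all x ≠ y in [0,1]. Then the Hausdorff dimension of the graph {(x, f(x)) : x ∈ [0,1]} equals 1. -/

import Mathlib

/-!
Fix `d > 1` and cover the graph at scale `2⁻ⁿ` column by column over the dyadic intervals
`Iⱼ` of generation `n`. Put `h₀ = 2 ^ (-4n/c)`. Two points of `Iⱼ` at distance at least `h₀`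
have `|f x - f y| ≤ C (4n/c)ᵏ ΔⱼF`, where `ΔⱼF` is the increment of `F` over `Iⱼ`; for closer
points the Hölder bound on `F` beats the logarithmic factor and gives `|f x - f y| = O(4⁻ⁿ)`.
Hence column `j` needs `O(2ⁿ (nᵏ ΔⱼF + 4⁻ⁿ) + 1)` squares of side `2⁻ⁿ`, and since the `ΔⱼF`
add up to `F 1 - F 0`, the whole graph needs `O(nᵏ 2ⁿ)` of them. As `nᵏ 2ⁿ 2⁻ⁿᵈ → 0`, the
`d`-dimensional Hausdorff measure of the graph vanishes. The lower bound holds because the graph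
projects onto `[0, 1]`.
-/

open Set Filter MeasureTheory Real
open scoped ENNReal Topology

theorem ediam_prod_le {X Y : Type*} [PseudoEMetricSpace X] [PseudoEMetricSpace Y]
    (s : Set X) (t : Set Y) : Metric.ediam (s ×ˢ t) ≤ max (Metric.ediam s) (Metric.ediam t) :=
  Metric.ediam_le fun p hp q hq => by
    rw [Prod.edist_eq]
    exact max_le_max (Metric.edist_le_ediam_of_mem hp.1 hq.1)
      (Metric.edist_le_ediam_of_mem hp.2 hq.2)

theorem dimH_Icc_zero_one : dimH (Icc (0 : ℝ) 1) = 1 := by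
  rw [← segment_eq_Icc zero_le_one]
  exact Real.dimH_segment zero_ne_one

theorem dimH_le_dimH_graphOn {X Y : Type*} [EMetricSpace X] [EMetricSpace Y] (f : X → Y)
    (s : Set X) : dimH s ≤ dimH (s.graphOn f) := by
  simpa only [image_fst_graphOn] using LipschitzWith.prod_fst.dimH_image_le (s.graphOn f)

theorem MonotoneOn.abs_sub_le_sub {F : ℝ → ℝ} {s : Set ℝ} (hF : MonotoneOn F s) {a b x y : ℝ}
    (hab : Icc a b ⊆ s) (hx : x ∈ Icc a b) (hy : y ∈ Icc a b) : |F x - F y| ≤ F b - F a := by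
  have ha : a ∈ s := hab ⟨le_rfl, hx.1.trans hx.2⟩
  have hb : b ∈ s := hab ⟨hx.1.trans hx.2, le_rfl⟩
  exact Real.dist_le_of_mem_Icc ⟨hF ha (hab hx) hx.1, hF (hab hx) hb hx.2⟩
    ⟨hF ha (hab hy) hy.1, hF (hab hy) hb hy.2⟩

theorem exists_lt_mem_Icc_add_mul {m δ x : ℝ} {N : ℕ} (hδ : 0 < δ) (hN : 0 < N)
    (hx : x ∈ Icc m (m + N * δ)) : ∃ i < N, x ∈ Icc (m + i * δ) (m + i * δ + δ) := by
  have hq : 0 ≤ (x - m) / δ := div_nonneg (by linarith [hx.1]) hδ.le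
  obtain ⟨i, hi⟩ : ∃ i, i = min ⌊(x - m) / δ⌋₊ (N - 1) := ⟨_, rfl⟩
  refine ⟨i, by omega, ?_, ?_⟩
  · have : (i : ℝ) ≤ (x - m) / δ := (Nat.cast_le.2 (hi ▸ min_le_left _ _)).trans (Nat.floor_le hq)
    rw [le_div_iff₀ hδ] at this
    linarith
  · rcases le_total ⌊(x - m) / δ⌋₊ (N - 1) with h | h
    · have := Nat.lt_floor_add_one ((x - m) / δ)
      rw [← min_eq_left h, ← hi, div_lt_iff₀ hδ] at this
      linarith
    · rw [hi, min_eq_right h, Nat.cast_sub hN, Nat.cast_one]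
      linarith [hx.2]

theorem exists_neg_logb_pow_mul_rpow_le {c : ℝ} (hc : 0 < c) (k : ℕ) :
    ∃ M, 0 ≤ M ∧ ∀ h ∈ Ioc (0 : ℝ) 1, (-logb 2 h) ^ k * h ^ c ≤ M * h ^ (c / 2) := by
  refine ⟨k.factorial / (c / 2 * log 2) ^ k, by positivity, fun h hh => ?_⟩
  have hl2 : 0 < log 2 := log_pos one_lt_two
  set u := -log h with hu
  have hu0 : 0 ≤ u := neg_nonneg.2 (log_nonpos hh.1.le hh.2)
  -- half of the decay `h ^ c = exp (-c u)` absorbs `u ^ k`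
  have hexp := pow_div_factorial_le_exp (c / 2 * u) (by positivity) k
  rw [div_le_iff₀ (by positivity)] at hexp
  have hhc : ∀ e, h ^ e = exp (-(u * e)) := fun e => by
    rw [rpow_def_of_pos hh.1, hu, neg_mul, neg_neg]
  rw [hhc, hhc, show -logb 2 h = u / log 2 by rw [logb, hu, neg_div]]
  calc (u / log 2) ^ k * exp (-(u * c))
      = (c / 2 * u) ^ k / (c / 2 * log 2) ^ k * exp (-(u * c)) := by
        rw [← div_pow, mul_div_mul_left _ _ (by positivity : c / 2 ≠ 0)]
    _ ≤ exp (c / 2 * u) * k.factorial / (c / 2 * log 2) ^ k * exp (-(u * c)) := by gcongr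
    _ = k.factorial / (c / 2 * log 2) ^ k * exp (-(u * (c / 2))) := by
        rw [show -(u * (c / 2)) = c / 2 * u + -(u * c) by ring, exp_add]
        ring

theorem tendsto_mul_two_pow_mul_inv_two_pow_rpow (A B : ℝ) (k : ℕ) {d : ℝ} (hd : 1 < d) :
    Tendsto (fun n : ℕ => (A * n ^ k + B) * 2 ^ n * ((2 ^ n : ℝ)⁻¹) ^ d) atTop (𝓝 0) := by
  set q : ℝ := 2 * 2 ^ (-d)
  have hq0 : 0 ≤ q := by positivity
  have hq1 : q < 1 := by
    have : (2 : ℝ) ^ (-d) < 2 ^ (-1 : ℝ) := rpow_lt_rpow_of_exponent_lt one_lt_two (by linarith)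
    rw [rpow_neg_one] at this
    linarith
  have hform : ∀ n : ℕ,
      (A * n ^ k + B) * 2 ^ n * ((2 ^ n : ℝ)⁻¹) ^ d = A * (n ^ k * q ^ n) + B * q ^ n := by
    intro n
    rw [← rpow_natCast 2 n, inv_rpow (by norm_num), ← rpow_mul zero_le_two, ← rpow_neg zero_le_two,
      show -(n * d) = -d * n by ring, rpow_mul_natCast zero_le_two, rpow_natCast, mul_pow]
    ring
  have := ((tendsto_pow_const_mul_const_pow_of_lt_one k hq0 hq1).const_mul A).add
    ((tendsto_pow_atTop_nhds_zero_of_lt_one hq0 hq1).const_mul B)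
  simpa only [hform, mul_zero, add_zero] using this

theorem hausdorffMeasure_eq_zero_of_finset_covers {X : Type*} [EMetricSpace X] [MeasurableSpace X]
    [BorelSpace X] {s : Set X} {d : ℝ} (hd : 0 ≤ d) {r N : ℕ → ℝ} (hr0 : ∀ n, 0 ≤ r n)
    (hr : Tendsto r atTop (𝓝 0))
    (hcov : ∀ n, ∃ t : Finset (Set X), s ⊆ ⋃₀ ↑t ∧
      (∀ u ∈ t, Metric.ediam u ≤ ENNReal.ofReal (r n)) ∧ (t.card : ℝ) ≤ N n)
    (hN : Tendsto (fun n => N n * r n ^ d) atTop (𝓝 0)) : μH[d] s = 0 := by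
  choose t hst hdiam hcard using hcov
  have hsum : ∀ n, ∑ u : t n, Metric.ediam (u : Set X) ^ d ≤ ENNReal.ofReal (N n * r n ^ d) :=
    fun n => calc
      ∑ u : t n, Metric.ediam (u : Set X) ^ d ≤ ∑ _u : t n, ENNReal.ofReal (r n) ^ d :=
        Finset.sum_le_sum fun u _ => ENNReal.rpow_le_rpow (hdiam n u u.2) hd
      _ = ENNReal.ofReal (t n).card * ENNReal.ofReal (r n ^ d) := by
        rw [Finset.sum_const, Finset.card_univ, Fintype.card_coe, nsmul_eq_mul,
          ENNReal.ofReal_rpow_of_nonneg (hr0 n) hd, ENNReal.ofReal_natCast]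
      _ ≤ ENNReal.ofReal (N n * r n ^ d) := by
        rw [ENNReal.ofReal_mul ((Nat.cast_nonneg _).trans (hcard n))]
        gcongr
        exact hcard n
  have hlim : Tendsto (fun n => ∑ u : t n, Metric.ediam (u : Set X) ^ d) atTop (𝓝 0) :=
    tendsto_of_tendsto_of_tendsto_of_le_of_le tendsto_const_nhds
      (ENNReal.ofReal_zero ▸ ENNReal.tendsto_ofReal hN) (fun _ => zero_le) hsum
  refine le_antisymm ?_ zero_le
  refine (Measure.hausdorffMeasure_le_liminf_sum d s _
    (ENNReal.ofReal_zero ▸ ENNReal.tendsto_ofReal hr)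
    (fun n (u : t n) => (u : Set X)) (Eventually.of_forall fun n u => hdiam n u u.2)
    (Eventually.of_forall fun n => ?_)).trans_eq hlim.liminf_eq
  simpa only [sUnion_eq_biUnion, iUnion_subtype, Finset.mem_coe] using hst n

theorem exists_finset_cover_graphOn (g : ℝ → ℝ) {a δ : ℝ} (hδ : 0 < δ) {N : ℕ} (hN : 0 < N)
    (ω : ℕ → ℝ) (hω : ∀ j < N, ∀ x ∈ Icc (a + j * δ) (a + j * δ + δ),
      ∀ y ∈ Icc (a + j * δ) (a + j * δ + δ), |g x - g y| ≤ ω j) :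
    ∃ t : Finset (Set (ℝ × ℝ)), (Icc a (a + N * δ)).graphOn g ⊆ ⋃₀ ↑t ∧
      (∀ u ∈ t, Metric.ediam u ≤ ENNReal.ofReal δ) ∧
      (t.card : ℝ) ≤ ∑ j ∈ Finset.range N, (2 * ω j / δ + 1) := by
  classical
  have hω0 : ∀ j < N, 0 ≤ ω j := fun j hj =>
    (abs_nonneg _).trans (hω j hj _ ⟨le_rfl, by linarith⟩ _ ⟨le_rfl, by linarith⟩)
  set base : ℕ → ℝ := fun j => g (a + j * δ) - ω j
  set K : ℕ → ℕ := fun j => ⌊2 * ω j / δ⌋₊ + 1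
  refine ⟨(Finset.range N).biUnion fun j => (Finset.range (K j)).image fun i : ℕ =>
    Icc (a + j * δ) (a + j * δ + δ) ×ˢ Icc (base j + i * δ) (base j + i * δ + δ), ?_, ?_, ?_⟩
  · rintro _ ⟨x, hx, rfl⟩
    obtain ⟨j, hj, hxj⟩ := exists_lt_mem_Icc_add_mul hδ hN hx
    have hgx := abs_sub_le_iff.1 (hω j hj x hxj _ ⟨le_rfl, by linarith⟩)
    have hK : 2 * ω j < K j * δ := by
      have := Nat.lt_floor_add_one (2 * ω j / δ)
      rw [div_lt_iff₀ hδ] at this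
      exact_mod_cast this
    obtain ⟨i, hi, hgi⟩ := exists_lt_mem_Icc_add_mul hδ (Nat.succ_pos _)
      (show g x ∈ Icc (base j) (base j + K j * δ) from ⟨by linarith, by linarith⟩)
    exact mem_sUnion.2 ⟨_, Finset.mem_biUnion.2 ⟨j, Finset.mem_range.2 hj,
      Finset.mem_image.2 ⟨i, Finset.mem_range.2 hi, rfl⟩⟩, hxj, hgi⟩
  · simp only [Finset.mem_biUnion, Finset.mem_image]
    rintro _ ⟨j, -, i, -, rfl⟩
    refine (ediam_prod_le _ _).trans ?_
    simp only [Real.ediam_Icc, add_sub_cancel_left, max_self, le_refl]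
  · calc (((Finset.range N).biUnion _).card : ℝ) ≤ ∑ j ∈ Finset.range N, (K j : ℝ) := by
          exact_mod_cast Finset.card_biUnion_le.trans (Finset.sum_le_sum fun j _ =>
            Finset.card_image_le.trans (Finset.card_range _).le)
      _ ≤ ∑ j ∈ Finset.range N, (2 * ω j / δ + 1) := Finset.sum_le_sum fun j hj => by
          simp only [K, Nat.cast_add, Nat.cast_one]
          gcongr
          exact Nat.floor_le
            (div_nonneg (mul_nonneg zero_le_two (hω0 j (Finset.mem_range.1 hj))) hδ.le)

section Modulus

variable {F f : ℝ → ℝ} {c C L M : ℝ} {k : ℕ}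

theorem abs_sub_le_of_modulus (hFmono : MonotoneOn F (Icc 0 1))
    (hFhold : ∀ x ∈ Icc (0 : ℝ) 1, ∀ y ∈ Icc (0 : ℝ) 1, |F x - F y| ≤ L * |x - y| ^ c)
    (hL : 0 ≤ L) (hc : 0 ≤ c) (hC : 0 ≤ C)
    (hmod : ∀ x ∈ Icc (0 : ℝ) 1, ∀ y ∈ Icc (0 : ℝ) 1, x ≠ y →
      |f x - f y| ≤ C * (-logb 2 |x - y|) ^ k * |F x - F y|)
    (hM0 : 0 ≤ M) (hM : ∀ h ∈ Ioc (0 : ℝ) 1, (-logb 2 h) ^ k * h ^ c ≤ M * h ^ (c / 2))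
    {a b h₀ : ℝ} (hab : Icc a b ⊆ Icc 0 1) (hh₀ : h₀ ∈ Ioc (0 : ℝ) 1) {x y : ℝ}
    (hx : x ∈ Icc a b) (hy : y ∈ Icc a b) :
    |f x - f y| ≤ C * (-logb 2 h₀) ^ k * (F b - F a) + C * L * M * h₀ ^ (c / 2) := by
  have hneglog : ∀ h ∈ Ioc (0 : ℝ) 1, 0 ≤ -logb 2 h := fun h hh =>
    neg_nonneg.2 (logb_nonpos one_lt_two hh.1.le hh.2)
  have hΔF := hFmono.abs_sub_le_sub hab hx hy
  have hFab : 0 ≤ F b - F a := (abs_nonneg _).trans hΔF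
  have hterm₁ : 0 ≤ C * (-logb 2 h₀) ^ k * (F b - F a) :=
    mul_nonneg (mul_nonneg hC (pow_nonneg (hneglog h₀ hh₀) k)) hFab
  have hterm₂ : 0 ≤ C * L * M * h₀ ^ (c / 2) := by have := hh₀.1; positivity
  rcases eq_or_ne x y with rfl | hxy
  · rw [sub_self, abs_zero]
    exact add_nonneg hterm₁ hterm₂
  have hx01 := hab hx
  have hy01 := hab hy
  have hh : |x - y| ∈ Ioc (0 : ℝ) 1 :=
    ⟨abs_pos.2 (sub_ne_zero.2 hxy), Real.dist_le_of_mem_Icc_01 hx01 hy01⟩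
  have hmxy := hmod x hx01 y hy01 hxy
  rcases le_or_gt h₀ |x - y| with hle | hlt
  · have : -logb 2 |x - y| ≤ -logb 2 h₀ := neg_le_neg (logb_le_logb_of_le one_lt_two hh₀.1 hle)
    calc |f x - f y| ≤ C * (-logb 2 |x - y|) ^ k * |F x - F y| := hmxy
      _ ≤ C * (-logb 2 h₀) ^ k * (F b - F a) := by
        have := hneglog _ hh
        have := hneglog _ hh₀
        gcongr
      _ ≤ _ := le_add_of_nonneg_right hterm₂
  · calc |f x - f y| ≤ C * (-logb 2 |x - y|) ^ k * |F x - F y| := hmxy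
      _ ≤ C * (-logb 2 |x - y|) ^ k * (L * |x - y| ^ c) := by
        have := hneglog _ hh
        gcongr
        exact hFhold x hx01 y hy01
      _ = C * L * ((-logb 2 |x - y|) ^ k * |x - y| ^ c) := by ring
      _ ≤ C * L * (M * |x - y| ^ (c / 2)) := mul_le_mul_of_nonneg_left (hM _ hh) (by positivity)
      _ ≤ C * L * M * h₀ ^ (c / 2) := by
        rw [← mul_assoc]
        gcongr
      _ ≤ _ := le_add_of_nonneg_left hterm₁

theorem exists_finset_cover_graphOn_of_modulus (hFmono : MonotoneOn F (Icc 0 1))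
    (hFhold : ∀ x ∈ Icc (0 : ℝ) 1, ∀ y ∈ Icc (0 : ℝ) 1, |F x - F y| ≤ L * |x - y| ^ c)
    (hL : 0 ≤ L) (hc : 0 < c) (hC : 0 ≤ C)
    (hmod : ∀ x ∈ Icc (0 : ℝ) 1, ∀ y ∈ Icc (0 : ℝ) 1, x ≠ y →
      |f x - f y| ≤ C * (-logb 2 |x - y|) ^ k * |F x - F y|)
    (hM0 : 0 ≤ M) (hM : ∀ h ∈ Ioc (0 : ℝ) 1, (-logb 2 h) ^ k * h ^ c ≤ M * h ^ (c / 2)) (n : ℕ) :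
    ∃ t : Finset (Set (ℝ × ℝ)), (Icc 0 1).graphOn f ⊆ ⋃₀ ↑t ∧
      (∀ u ∈ t, Metric.ediam u ≤ ENNReal.ofReal (2 ^ n)⁻¹) ∧
      (t.card : ℝ) ≤ (2 * C * (4 / c) ^ k * (F 1 - F 0) * n ^ k + (2 * C * L * M + 1)) * 2 ^ n := by
  set δ : ℝ := (2 ^ n)⁻¹ with hδ_def
  have hδ : 0 < δ := by positivity
  have hNδ : (2 : ℝ) ^ n * δ = 1 := mul_inv_cancel₀ (by positivity)
  have hcol : ∀ j : ℕ, j < 2 ^ n → Icc (0 + j * δ) (0 + j * δ + δ) ⊆ Icc 0 1 := fun j hj =>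
    Icc_subset_Icc (by positivity) <| by
      rw [← hNδ, zero_add, ← add_one_mul]
      gcongr
      exact_mod_cast Nat.succ_le_of_lt hj
  -- `h₀ ^ (c / 2) = 4⁻ⁿ` makes the short-range term negligible, while `-logb 2 h₀` is linear in `n`
  set h₀ : ℝ := 2 ^ (-(4 / c * n))
  have hh₀ : h₀ ∈ Ioc (0 : ℝ) 1 :=
    ⟨by positivity, rpow_le_one_of_one_le_of_nonpos one_le_two (neg_nonpos.2 (by positivity))⟩
  have hlog : -logb 2 h₀ = 4 / c * n := by rw [logb_rpow two_pos (by norm_num), neg_neg]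
  have hpow : h₀ ^ (c / 2) = δ ^ 2 := by
    rw [hδ_def, ← rpow_mul zero_le_two, ← inv_pow, ← pow_mul, ← rpow_natCast, inv_rpow zero_le_two,
      ← rpow_neg zero_le_two]
    congr 1
    push_cast
    field_simp
    ring
  obtain ⟨t, hcov, hdiam, hcard⟩ := exists_finset_cover_graphOn f hδ (N := 2 ^ n) (by positivity)
    (fun j => C * (-logb 2 h₀) ^ k * (F (0 + j * δ + δ) - F (0 + j * δ)) + C * L * M * h₀ ^ (c / 2))
    fun j hj _ hx _ hy =>
      abs_sub_le_of_modulus hFmono hFhold hL hc.le hC hmod hM0 hM (hcol j hj) hh₀ hx hy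
  rw [zero_add, Nat.cast_pow, Nat.cast_ofNat, hNδ] at hcov
  refine ⟨t, hcov, hdiam, hcard.trans ?_⟩
  have htel : ∑ j ∈ Finset.range (2 ^ n), (F (0 + j * δ + δ) - F (0 + j * δ)) = F 1 - F 0 := by
    simpa [add_one_mul, hNδ] using Finset.sum_range_sub (fun j : ℕ => F (j * δ)) (2 ^ n)
  have hCLM : 0 ≤ C * L * M := by positivity
  have h2n : (1 : ℝ) ≤ 2 ^ n := one_le_pow₀ one_le_two
  calc _ = 2 * C * (4 / c * n) ^ k / δ * (F 1 - F 0) + 2 ^ n * (2 * C * L * M * δ ^ 2 / δ + 1) := by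
        simp only [mul_add, add_div, Finset.sum_add_distrib, ← Finset.sum_div, ← Finset.mul_sum,
          htel, Finset.sum_const, Finset.card_range, nsmul_eq_mul, hlog, hpow]
        push_cast
        ring
    _ ≤ (2 * C * (4 / c) ^ k * (F 1 - F 0) * n ^ k + (2 * C * L * M + 1)) * 2 ^ n := by
        rw [hδ_def, mul_pow]
        field_simp
        nlinarith [mul_le_mul_of_nonneg_left h2n hCLM]

end Modulus

theorem dimH_graph_eq_one (F f : ℝ → ℝ) (c : ℝ) (hc : 0 < c)
    (hFmono : MonotoneOn F (Set.Icc 0 1))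
    (hFhold : ∀ x ∈ Set.Icc (0:ℝ) 1, ∀ y ∈ Set.Icc (0:ℝ) 1,
      |F x - F y| ≤ 5 * |x - y| ^ c)
    (C : ℝ) (hC : 0 < C) (k : ℕ)
    (hmod : ∀ x ∈ Set.Icc (0:ℝ) 1, ∀ y ∈ Set.Icc (0:ℝ) 1, x ≠ y →
      |f x - f y| ≤ C * (-Real.logb 2 |x - y|) ^ k * |F x - F y|) :
    dimH {q : ℝ × ℝ | ∃ x ∈ Set.Icc (0:ℝ) 1, q = (x, f x)} = 1 := by
  obtain ⟨M, hM0, hM⟩ := exists_neg_logb_pow_mul_rpow_le hc k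
  have hgraph : {q : ℝ × ℝ | ∃ x ∈ Icc (0 : ℝ) 1, q = (x, f x)} = (Icc 0 1).graphOn f := by
    ext q
    exact exists_congr fun x => and_congr_right fun _ => eq_comm
  rw [hgraph]
  refine le_antisymm (dimH_le fun d hd => ?_) (dimH_Icc_zero_one ▸ dimH_le_dimH_graphOn f _)
  by_contra! hd1
  have hμ : μH[d] ((Icc 0 1).graphOn f) = 0 :=
    hausdorffMeasure_eq_zero_of_finset_covers d.2 (fun n => (inv_pos.2 (pow_pos two_pos n)).le)
      (tendsto_inv_atTop_zero.comp (tendsto_pow_atTop_atTop_of_one_lt one_lt_two))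
      (exists_finset_cover_graphOn_of_modulus hFmono hFhold (by norm_num) hc hC.le hmod hM0 hM)
      (tendsto_mul_two_pow_mul_inv_two_pow_rpow _ _ k (by exact_mod_cast hd1))
  exact ENNReal.zero_ne_top (hμ ▸ hd)
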